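/- arXiv:1603.02562 — 5 statements merged into one kernel-verified Lean document; each statement's English description precedes it below -/
import Mathlib

section
/- If V is an n-dimensional vector space over a finite field with q elements, then the non-zero component graph Γ(V) has exactly q^n − 1 vertices and (q^{2n} − q^n + 1 − (2q−1)^n)/2 edges. -/
/-- `W` is a resolving set of `G`: distinct vertices have distinct distance vectors to `W`. -/
def Resolves {α : Type*} (G : SimpleGraph α) (W : Set α) : Prop :=
  ∀ u v : α, (∀ w ∈ W, G.dist u w = G.dist v w) → u = v

/-- The metric dimension of `G`: minimum cardinality of a resolving set. -/
noncomputable def metricDim {α : Type*} (G : SimpleGraph α) : ℕ :=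
  sInf {k | ∃ W : Set α, W.ncard = k ∧ Resolves G W}

/-- A minimal resolving set: no proper subset resolves. -/
def MinimalResolves {α : Type*} (G : SimpleGraph α) (W : Set α) : Prop :=
  Resolves G W ∧ ∀ W' ⊂ W, ¬ Resolves G W'

/-- The exchange property for minimal resolving sets. -/
def ExchangeProperty {α : Type*} (G : SimpleGraph α) : Prop :=
  ∀ W₁ W₂ : Set α, MinimalResolves G W₁ → MinimalResolves G W₂ →
    ∀ r ∈ W₁, ∃ s ∈ W₂, MinimalResolves G (insert r (W₂ \ {s}))

/-- `u` and `v` are twins: equal open neighborhoods or equal closed neighborhoods. -/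
def Twins {α : Type*} (G : SimpleGraph α) (u v : α) : Prop :=
  G.neighborSet u = G.neighborSet v ∨
    insert u (G.neighborSet u) = insert v (G.neighborSet v)

/-- The non-zero component graph of `Fin n → F` with respect to the standard basis:
vertices are the non-zero vectors, adjacency means the supports (skeletons) intersect. -/
def NZCGraph (F : Type*) [Field F] (n : ℕ) :
    SimpleGraph {v : Fin n → F // v ≠ 0} where
  Adj u v := u ≠ v ∧ ∃ i, (u : Fin n → F) i ≠ 0 ∧ (v : Fin n → F) i ≠ 0
  symm := by
    constructor
    rintro u v ⟨h, i, hu, hv⟩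
    exact ⟨h.symm, i, hv, hu⟩
  loopless := by constructor; rintro u ⟨h, _⟩; exact h rfl

/-! Count ordered pairs `(u, v)` of vectors in `F^n`, i.e. darts of the graph. Such a pair is
*not* a dart iff `u = v` (`q^n` pairs) or the supports of `u` and `v` are disjoint
(`(2q - 1)^n` pairs, as each coordinate pair `(uᵢ, vᵢ)` has a zero entry); this covers the
pairs involving `0`, and the two cases overlap only in `(0, 0)`. Hence there are
`q^{2n} - q^n - (2q - 1)^n + 1` darts, twice the number of edges. -/

open Finset

section DisjointSupports

variable {ι R : Type*} [Fintype ι] [DecidableEq ι] [Fintype R] [Zero R] [DecidableEq R]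

lemma card_prod_fst_eq_zero_or_snd_eq_zero :
    Fintype.card {b : R × R // b.1 = 0 ∨ b.2 = 0} = 2 * Fintype.card R - 1 := by
  have hsplit : ({b : R × R | b.1 = 0 ∨ b.2 = 0} : Finset (R × R)) = {0} ×ˢ univ ∪ univ ×ˢ {0} := by
    ext ⟨x, y⟩; simp [eq_comm]
  have hinter : ({0} ×ˢ univ ∩ univ ×ˢ {0} : Finset (R × R)) = {(0, 0)} := by
    ext ⟨x, y⟩; simp [eq_comm]
  have h := card_union_add_card_inter ({0} ×ˢ univ : Finset (R × R)) (univ ×ˢ {0})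
  rw [hinter, ← hsplit] at h
  simp only [card_product, card_singleton, card_univ, one_mul, mul_one] at h
  rw [Fintype.card_subtype]
  omega

lemma card_pairs_with_disjoint_supports :
    Fintype.card {p : (ι → R) × (ι → R) // ∀ i, p.1 i = 0 ∨ p.2 i = 0} =
      (2 * Fintype.card R - 1) ^ Fintype.card ι := by
  let e : {p : (ι → R) × (ι → R) // ∀ i, p.1 i = 0 ∨ p.2 i = 0} ≃
      (ι → {b : R × R // b.1 = 0 ∨ b.2 = 0}) :=
    ((Equiv.arrowProdEquivProdArrow ι (fun _ => R) (fun _ => R)).subtypeEquiv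
      fun _ => Iff.rfl).symm.trans
      (Equiv.subtypePiEquivPi (β := fun _ => R × R) (p := fun _ b => b.1 = 0 ∨ b.2 = 0))
  rw [Fintype.card_congr e, Fintype.card_fun, card_prod_fst_eq_zero_or_snd_eq_zero]

lemma card_pairs_ne_with_common_support_add_eq :
    Fintype.card {p : (ι → R) × (ι → R) // p.1 ≠ p.2 ∧ ∃ i, p.1 i ≠ 0 ∧ p.2 i ≠ 0} +
        Fintype.card R ^ Fintype.card ι + (2 * Fintype.card R - 1) ^ Fintype.card ι =
      Fintype.card R ^ (2 * Fintype.card ι) + 1 := by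
  set diagonal : Finset ((ι → R) × (ι → R)) := {p | p.1 = p.2}
  set disjointSupports : Finset ((ι → R) × (ι → R)) := {p | ∀ i, p.1 i = 0 ∨ p.2 i = 0}
  have hcompl : ({p | p.1 ≠ p.2 ∧ ∃ i, p.1 i ≠ 0 ∧ p.2 i ≠ 0} : Finset _) =
      univ \ (diagonal ∪ disjointSupports) := by
    ext p; simp [diagonal, disjointSupports]
  -- a vector whose support is disjoint from itself is zero
  have hinter : diagonal ∩ disjointSupports = {(0, 0)} := by
    ext ⟨u, v⟩
    simp only [diagonal, disjointSupports, mem_inter, mem_filter_univ, mem_singleton, Prod.mk.injEq]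
    constructor
    · rintro ⟨rfl, h⟩
      have hu : u = 0 := funext fun i => (h i).elim id id
      exact ⟨hu, hu⟩
    · rintro ⟨rfl, rfl⟩
      exact ⟨rfl, fun _ => Or.inl rfl⟩
  have hdiagonal : #diagonal = Fintype.card R ^ Fintype.card ι := by
    rw [show diagonal = diag univ by ext; simp [diagonal], diag_card, card_univ, Fintype.card_fun]
  have hdisjoint : #disjointSupports = (2 * Fintype.card R - 1) ^ Fintype.card ι := by
    rw [← card_pairs_with_disjoint_supports, Fintype.card_subtype]
  have hunion := card_union_add_card_inter diagonal disjointSupports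
  have hcard := card_sdiff_add_card_eq_card (subset_univ (diagonal ∪ disjointSupports))
  rw [hinter, card_singleton, hdiagonal, hdisjoint] at hunion
  rw [← hcompl, card_univ, Fintype.card_prod, Fintype.card_fun, ← pow_add, ← two_mul] at hcard
  rw [Fintype.card_subtype]
  omega

end DisjointSupports

def nzcGraphDartEquiv (F : Type*) [Field F] (n : ℕ) :
    (NZCGraph F n).Dart ≃
      {p : (Fin n → F) × (Fin n → F) // p.1 ≠ p.2 ∧ ∃ i, p.1 i ≠ 0 ∧ p.2 i ≠ 0} where
  toFun d := ⟨(d.fst, d.snd), fun h => d.adj.1 (Subtype.ext h), d.adj.2⟩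
  invFun p :=
    { toProd := (⟨p.1.1, fun h => by obtain ⟨i, hi, -⟩ := p.2.2; simp [h] at hi⟩,
        ⟨p.1.2, fun h => by obtain ⟨i, -, hi⟩ := p.2.2; simp [h] at hi⟩)
      adj := ⟨fun h => p.2.1 (congrArg Subtype.val h), p.2.2⟩ }
  left_inv _ := rfl
  right_inv _ := rfl

theorem stmt0 (q n : ℕ) (F : Type*) [Field F] [Fintype F] (hq : Fintype.card F = q) :
    Nat.card {v : Fin n → F // v ≠ 0} = q ^ n - 1 ∧
    (NZCGraph F n).edgeSet.ncard = (q ^ (2 * n) - q ^ n + 1 - (2 * q - 1) ^ n) / 2 := by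
  classical
  subst hq
  constructor
  · rw [Nat.card_eq_fintype_card, Fintype.card_subtype_compl, Fintype.card_subtype_eq,
      Fintype.card_fun, Fintype.card_fin]
  · have hcount : 2 * #(NZCGraph F n).edgeFinset + Fintype.card F ^ n +
        (2 * Fintype.card F - 1) ^ n = Fintype.card F ^ (2 * n) + 1 := by
      rw [← SimpleGraph.dart_card_eq_twice_card_edges, Fintype.card_congr (nzcGraphDartEquiv F n)]
      convert card_pairs_ne_with_common_support_add_eq (ι := Fin n) (R := F) using 4 <;> simp
    have hpos : 1 ≤ (2 * Fintype.card F - 1) ^ n :=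
      Nat.one_le_pow _ _ (by have := Fintype.card_pos (α := F); omega)
    rw [← SimpleGraph.coe_edgeFinset, Set.ncard_coe_finset]
    omega
end

section
/- The non-zero component graph Γ(V) is a complete graph if and only if V is a 1-dimensional vector space. -/
namespace NZCGraph

variable {F : Type*} [Field F] {n : ℕ}

def basisVertex (i : Fin n) : {v : Fin n → F // v ≠ 0} :=
  ⟨Pi.single i 1, Pi.single_ne_zero_iff.2 one_ne_zero⟩

lemma basisVertex_injective : Function.Injective (basisVertex (F := F) (n := n)) := by
  intro i j hij
  by_contra hne
  have h := congrArg (fun v : {v : Fin n → F // v ≠ 0} => (v : Fin n → F) i) hij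
  simp [basisVertex, Pi.single_eq_of_ne hne] at h

lemma not_adj_basisVertex {i j : Fin n} (hij : i ≠ j) :
    ¬ (NZCGraph F n).Adj (basisVertex i) (basisVertex j) := by
  rintro ⟨-, k, hi, hj⟩
  by_cases hki : k = i
  · exact hj (Pi.single_eq_of_ne (hki ▸ hij) 1)
  · exact hi (Pi.single_eq_of_ne hki 1)

lemma eq_top_iff_subsingleton : NZCGraph F n = ⊤ ↔ Subsingleton (Fin n) := by
  constructor
  · intro htop
    refine ⟨fun i j => by_contra fun hij => not_adj_basisVertex (F := F) hij ?_⟩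
    rw [htop, SimpleGraph.top_adj]
    exact basisVertex_injective.ne hij
  · intro _
    ext u v
    refine ⟨fun huv => huv.1, fun huv => ⟨huv, ?_⟩⟩
    obtain ⟨i, hu⟩ := Function.ne_iff.1 u.2
    obtain ⟨j, hv⟩ := Function.ne_iff.1 v.2
    exact ⟨i, hu, Subsingleton.elim j i ▸ hv⟩

lemma eq_top_iff_le_one : NZCGraph F n = ⊤ ↔ n ≤ 1 :=
  eq_top_iff_subsingleton.trans Fin.subsingleton_iff_le_one

end NZCGraph

theorem stmt1_general (n : ℕ) (hn : 0 < n) (F : Type*) [Field F] :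
    NZCGraph F n = ⊤ ↔ n = 1 := by
  rw [NZCGraph.eq_top_iff_le_one]
  omega

theorem stmt1 (n : ℕ) (hn : 0 < n) (F : Type*) [Field F] [Fintype F] :
    NZCGraph F n = ⊤ ↔ n = 1 :=
  stmt1_general n hn F
end

section
/- If u and v are twins in a connected graph Γ, W is a resolving set with u ∈ W and v ∉ W, then (W \ {u}) ∪ {v} is also a resolving set of Γ. -/
/-!
Swapping two twins is a graph automorphism, and automorphisms preserve distances, so they carry
resolving sets to resolving sets. The swap maps `W` into `(W \ {u}) ∪ {v}`, and any superset of a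
resolving set resolves.
-/

namespace SimpleGraph

variable {V V' : Type*} {G : SimpleGraph V} {G' : SimpleGraph V'}

lemma edist_map_le (f : G →g G') (a b : V) : G'.edist (f a) (f b) ≤ G.edist a b := by
  by_cases hr : G.Reachable a b
  · obtain ⟨p, hp⟩ := hr.exists_walk_length_eq_edist
    calc G'.edist (f a) (f b) ≤ (p.map f).length := edist_le _
      _ = G.edist a b := by rw [Walk.length_map, hp]
  · rw [edist_eq_top_of_not_reachable hr]
    exact le_top

lemma Iso.edist_map (f : G ≃g G') (a b : V) : G'.edist (f a) (f b) = G.edist a b :=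
  le_antisymm (edist_map_le f.toHom a b) (by simpa using edist_map_le f.symm.toHom (f a) (f b))

lemma Iso.dist_map (f : G ≃g G') (a b : V) : G'.dist (f a) (f b) = G.dist a b :=
  congrArg ENat.toNat (f.edist_map a b)

end SimpleGraph

open SimpleGraph

section
variable {α β : Type*} {G : SimpleGraph α}

lemma Resolves.mono {W W' : Set α} (hW : Resolves G W) (hWW' : W ⊆ W') : Resolves G W' :=
  fun x y hxy => hW x y fun w hw => hxy w (hWW' hw)

lemma Resolves.image_iso {G' : SimpleGraph β} {W : Set α} (hW : Resolves G W) (σ : G ≃g G') :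
    Resolves G' (σ '' W) := by
  intro x y hxy
  refine σ.symm.injective (hW _ _ fun w hw => ?_)
  rw [← σ.dist_map, ← σ.dist_map, σ.apply_symm_apply, σ.apply_symm_apply]
  exact hxy _ (Set.mem_image_of_mem σ hw)

lemma Twins.adj_iff_of_ne {u v z : α} (h : Twins G u v) (hzu : z ≠ u) (hzv : z ≠ v) :
    G.Adj u z ↔ G.Adj v z := by
  rcases h with h | h
  · exact Set.ext_iff.mp h z
  · simpa [hzu, hzv] using Set.ext_iff.mp h z

lemma Twins.adj_swap [DecidableEq α] {u v : α} (h : Twins G u v) (a b : α) :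
    G.Adj (Equiv.swap u v a) (Equiv.swap u v b) ↔ G.Adj a b := by
  by_cases hau : a = u <;> by_cases hav : a = v <;> by_cases hbu : b = u <;>
    by_cases hbv : b = v <;>
    simp_all [Equiv.swap_apply_of_ne_of_ne, h.adj_iff_of_ne, adj_comm]

def Twins.swapIso [DecidableEq α] {u v : α} (h : Twins G u v) : G ≃g G where
  toEquiv := Equiv.swap u v
  map_rel_iff' := h.adj_swap _ _

end

theorem stmt3_general {α : Type*} (G : SimpleGraph α) (u v : α)
    (h : Twins G u v) (W : Set α) (hW : Resolves G W) (hv : v ∉ W) :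
    Resolves G (insert v (W \ {u})) := by
  classical
  refine (hW.image_iso h.swapIso).mono ?_
  rintro _ ⟨w, hw, rfl⟩
  by_cases hwu : w = u
  · simp [Twins.swapIso, hwu]
  · have hwv : w ≠ v := ne_of_mem_of_not_mem hw hv
    simp [Twins.swapIso, Equiv.swap_apply_of_ne_of_ne hwu hwv, hw, hwu]

theorem stmt3 {α : Type*} (G : SimpleGraph α) (hG : G.Connected) (u v : α) (huv : u ≠ v)
    (h : Twins G u v) (W : Set α) (hW : Resolves G W) (hu : u ∈ W) (hv : v ∉ W) :
    Resolves G (insert v (W \ {u})) :=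
  stmt3_general G u v h W hW hv
end

section
/- If q = 2 and n ≥ 3, then the metric dimension of the non-zero component graph Γ(V) is n. -/
/-
The all-ones vector is adjacent to every other vertex, so `Γ(V)` has diameter at most two and
the distance between distinct vertices is `1` or `2` according as they are adjacent or not.
Hence `d(u, αᵢ) ≤ 1` exactly when `αᵢ` lies in the skeleton of `u`, and over `𝔽₂` a vector is
determined by its skeleton: the basis resolves. Conversely, a vertex outside a resolving set `W`
is determined by its adjacencies to `W`, so `2ⁿ - 1 ≤ 2^|W| + |W|`, which forces `|W| ≥ n`
once `n ≥ 3`.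
-/

namespace SimpleGraph

variable {α : Type*} {G : SimpleGraph α}

lemma IsUniversal.ediam_le_two {c : α} (hc : G.IsUniversal c) : G.ediam ≤ 2 :=
  calc G.ediam ≤ 2 * G.eccent c := G.ediam_le_two_mul_eccent c
    _ ≤ 2 * 1 := by gcongr; exact (G.eccent_le_one_iff c).mpr hc
    _ = 2 := mul_one 2

lemma dist_eq_two_of_ediam_le_two (hG : G.ediam ≤ 2) {u v : α} (huv : u ≠ v)
    (hadj : ¬ G.Adj u v) : G.dist u v = 2 := by
  have hle : G.edist u v ≤ 2 := edist_le_ediam.trans hG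
  have hne0 : G.edist u v ≠ 0 := by simpa using huv
  have hne1 : G.edist u v ≠ 1 := by rwa [ne_eq, edist_eq_one_iff_adj]
  have h2 : G.edist u v = 2 := by
    generalize G.edist u v = d at *
    induction d using ENat.recTopCoe with
    | top => simp at hle
    | coe d => norm_cast at *; omega
  simp [dist, h2]

lemma dist_eq_dist_of_adj_iff (hG : G.ediam ≤ 2) {u v w : α} (hu : u ≠ w) (hv : v ≠ w)
    (h : G.Adj u w ↔ G.Adj v w) : G.dist u w = G.dist v w := by
  by_cases huw : G.Adj u w
  · rw [dist_eq_one_iff_adj.mpr huw, dist_eq_one_iff_adj.mpr (h.mp huw)]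
  · rw [dist_eq_two_of_ediam_le_two hG hu huw, dist_eq_two_of_ediam_le_two hG hv (h.not.mp huw)]

end SimpleGraph

lemma metricDim_eq_ncard_of_resolves {α : Type*} {G : SimpleGraph α} {W : Set α}
    (hW : Resolves G W) (hmin : ∀ W', Resolves G W' → W.ncard ≤ W'.ncard) :
    metricDim G = W.ncard :=
  le_antisymm (Nat.sInf_le ⟨W, rfl, hW⟩) (le_csInf ⟨_, W, rfl, hW⟩ (by
    rintro k ⟨W', rfl, hW'⟩
    exact hmin W' hW'))

lemma Resolves.card_le_two_pow_add {α : Type*} [Finite α] {G : SimpleGraph α}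
    (hG : G.ediam ≤ 2) {W : Set α} (hW : Resolves G W) :
    Nat.card α ≤ 2 ^ W.ncard + W.ncard := by
  have hinj : Set.InjOn (fun u (w : W) => G.Adj u w) Wᶜ := by
    intro u hu v hv huv
    refine hW u v fun w hw => ?_
    exact G.dist_eq_dist_of_adj_iff hG (fun h => hu (h ▸ hw)) (fun h => hv (h ▸ hw))
      (iff_of_eq (congrFun huv ⟨w, hw⟩))
  have hcompl : Wᶜ.ncard ≤ 2 ^ W.ncard := by
    calc Wᶜ.ncard ≤ (Set.univ : Set (W → Prop)).ncard :=
          Set.ncard_le_ncard_of_injOn _ (fun _ _ => Set.mem_univ _) hinj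
      _ = 2 ^ W.ncard := by
          rw [Set.ncard_univ, Nat.card_fun, Nat.card_eq_fintype_card, Fintype.card_prop,
            Nat.card_coe_set_eq]
  have := Set.ncard_compl_add_ncard W
  omega

lemma Nat.le_of_two_pow_sub_one_le_two_pow_add {n k : ℕ} (hn : 3 ≤ n)
    (h : 2 ^ n - 1 ≤ 2 ^ k + k) : n ≤ k := by
  by_contra! hk
  have h1 : 2 ^ k ≤ 2 ^ (n - 1) := Nat.pow_le_pow_right two_pos (by omega)
  have h2 : 2 ^ n = 2 * 2 ^ (n - 1) := by rw [← pow_succ']; congr 1; omega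
  have h3 : 2 ^ (n - 1) = 2 * 2 ^ (n - 2) := by rw [← pow_succ']; congr 1; omega
  have h4 : n - 2 < 2 ^ (n - 2) := Nat.lt_two_pow_self
  omega

namespace NZCGraph

variable {F : Type*} [Field F] {n : ℕ}

lemma isUniversal_one (h : (1 : Fin n → F) ≠ 0) : (NZCGraph F n).IsUniversal ⟨1, h⟩ := by
  intro v hv
  obtain ⟨i, hi⟩ := Function.ne_iff.mp v.2
  exact ⟨hv, i, one_ne_zero, hi⟩

lemma ediam_le_two : (NZCGraph F n).ediam ≤ 2 := by
  by_cases h : (1 : Fin n → F) = 0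
  · refine SimpleGraph.ediam_le_of_edist_le fun u _ => absurd ?_ u.2
    rw [← mul_one (u : Fin n → F), h, mul_zero]
  · exact (isUniversal_one h).ediam_le_two

lemma natCard_vertices [Finite F] : Nat.card {v : Fin n → F // v ≠ 0} = Nat.card F ^ n - 1 := by
  classical
  have := Fintype.ofFinite F
  rw [Nat.card_eq_fintype_card, Fintype.card_subtype_compl, Fintype.card_pi]
  simp [Nat.card_eq_fintype_card]

def single (i : Fin n) : {v : Fin n → F // v ≠ 0} :=
  ⟨Pi.single i 1, by simp⟩

lemma single_injective : Function.Injective (single (F := F) (n := n)) :=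
  fun i j h => by
    by_contra hij
    simpa [single, hij] using congrFun (congrArg Subtype.val h) i

lemma adj_single_iff {u : {v : Fin n → F // v ≠ 0}} {i : Fin n} (hu : u ≠ single i) :
    (NZCGraph F n).Adj u (single i) ↔ (u : Fin n → F) i ≠ 0 := by
  refine ⟨fun ⟨_, j, hj, hij⟩ => ?_, fun hi => ⟨hu, i, hi, by simp [single]⟩⟩
  obtain rfl : j = i := by
    by_contra h
    simp [single, h] at hij
  exact hj

lemma dist_single_le_one_iff (u : {v : Fin n → F // v ≠ 0}) (i : Fin n) :
    (NZCGraph F n).dist u (single i) ≤ 1 ↔ (u : Fin n → F) i ≠ 0 := by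
  by_cases hu : u = single i
  · subst hu
    simp [single]
  have hadj := adj_single_iff hu
  by_cases hi : (u : Fin n → F) i ≠ 0
  · simp [hi, SimpleGraph.dist_eq_one_iff_adj.mpr (hadj.mpr hi)]
  · simp [hi, SimpleGraph.dist_eq_two_of_ediam_le_two ediam_le_two hu (hadj.not.mpr hi)]

lemma resolves_range_single : Resolves (NZCGraph (ZMod 2) n) (Set.range single) := by
  intro u v h
  refine Subtype.ext (funext fun i => ?_)
  have hi := h (single i) ⟨i, rfl⟩
  have hskel : (u : Fin n → ZMod 2) i ≠ 0 ↔ (v : Fin n → ZMod 2) i ≠ 0 := by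
    rw [← dist_single_le_one_iff, ← dist_single_le_one_iff, hi]
  have hF₂ : ∀ a b : ZMod 2, (a ≠ 0 ↔ b ≠ 0) → a = b := by decide
  exact hF₂ _ _ hskel

end NZCGraph

theorem stmt7 (n : ℕ) (hn : 3 ≤ n) : metricDim (NZCGraph (ZMod 2) n) = n := by
  have hcard : (Set.range (NZCGraph.single (F := ZMod 2) (n := n))).ncard = n := by
    rw [Set.ncard_range_of_injective NZCGraph.single_injective, Nat.card_fin]
  rw [metricDim_eq_ncard_of_resolves NZCGraph.resolves_range_single, hcard]
  intro W hW
  rw [hcard]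
  refine Nat.le_of_two_pow_sub_one_le_two_pow_add hn ?_
  simpa [NZCGraph.natCard_vertices] using hW.card_le_two_pow_add NZCGraph.ediam_le_two
end

section
/- If q ≥ 3, then the exchange property for minimal resolving sets holds in the non-zero component graph Γ(V): for any two minimal resolving sets W_1, W_2 and any u_1 ∈ W_1, there exists u_2 ∈ W_2 such that (W_1 \ {u_1}) ∪ {u_2} is a minimal resolving set. -/
/-!
In `Γ(V)` two distinct vertices are at distance 1 or 2 according as their skeletons meet, so a
vertex outside `W` is seen from `W` only through its skeleton. For `q ≥ 3` every singleton
skeleton carries at least two vertices, so a resolving set contains a vertex of each singleton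
skeleton, and these already tell different skeletons apart. Hence `W` resolves iff the skeleton
map is injective on `Wᶜ`, and `W` is a minimal resolving set iff `Wᶜ` contains exactly one vertex
of each skeleton. If `m` is the vertex of `W₁ᶜ` with the skeleton of `u₁`, then `W₂` contains
`u₁` or `m`, and exchanging `u₁` for it keeps `W₁ᶜ` a system of representatives.
-/

namespace Set

variable {α β : Type*} {f : α → β}

lemma bijOn_insert_sdiff_singleton_of_apply_eq {s : Set α} {t : Set β} {a b : α}
    (h : BijOn f s t) (ha : a ∈ s) (hab : f b = f a) :
    BijOn f (insert b (s \ {a})) t := by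
  have hfb : f b ∉ t \ {f a} := fun hmem => hmem.2 hab
  simpa [hab, insert_eq_of_mem (h.mapsTo ha)] using (h.sdiff_singleton ha).insert hfb

lemma injOn_compl_minimal_iff_bijOn {W : Set α} :
    (InjOn f Wᶜ ∧ ∀ W' ⊂ W, ¬ InjOn f W'ᶜ) ↔ BijOn f Wᶜ (range f) := by
  constructor
  · rintro ⟨hinj, hmin⟩
    refine ⟨fun x _ => mem_range_self x, hinj, ?_⟩
    rintro _ ⟨x, rfl⟩
    by_cases hx : x ∈ W
    · by_contra hnot
      refine hmin (W \ {x}) (sdiff_singleton_ssubset.2 hx) ?_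
      rw [compl_sdiff, singleton_union, injOn_insert (not_not_intro hx)]
      exact ⟨hinj, hnot⟩
    · exact ⟨x, hx, rfl⟩
  · intro h
    refine ⟨h.injOn, fun W' hW' hinj => ?_⟩
    obtain ⟨x, hxW, hxW'⟩ := exists_of_ssubset hW'
    obtain ⟨y, hyW, hyx⟩ := h.surjOn (mem_range_self x)
    have hyW' : y ∈ W'ᶜ := fun hy => hyW (hW'.1 hy)
    exact hyW (hinj hyW' hxW' hyx ▸ hxW)

lemma exists_bijOn_compl_insert_sdiff_singleton {W₁ W₂ : Set α}
    (h₁ : BijOn f W₁ᶜ (range f)) (h₂ : BijOn f W₂ᶜ (range f)) {u₁ : α} (hu₁ : u₁ ∈ W₁) :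
    ∃ u₂ ∈ W₂, BijOn f (insert u₂ (W₁ \ {u₁}))ᶜ (range f) := by
  obtain ⟨m, hmW₁, hm⟩ := h₁.surjOn (mem_range_self u₁)
  by_cases hu₁W₂ : u₁ ∈ W₂
  · refine ⟨u₁, hu₁W₂, ?_⟩
    rwa [insert_sdiff_singleton, insert_eq_of_mem hu₁]
  have hmu₁ : m ≠ u₁ := fun h => hmW₁ (h ▸ hu₁)
  have hmW₂ : m ∈ W₂ := by
    by_contra hmW₂
    exact hmu₁ (h₂.injOn hmW₂ hu₁W₂ hm)
  refine ⟨m, hmW₂, ?_⟩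
  have hcompl : (insert m (W₁ \ {u₁}))ᶜ = insert u₁ (W₁ᶜ \ {m}) := by
    ext x
    by_cases hx : x = u₁ <;> by_cases hx' : x = m <;> simp_all
  rw [hcompl]
  exact bijOn_insert_sdiff_singleton_of_apply_eq h₁ hmW₁ hm.symm

end Set

namespace SimpleGraph

open Set

variable {V : Type*} {G : SimpleGraph V}

lemma dist_eq_two_of_adj_of_adj {u v w : V} (hne : u ≠ v) (huv : ¬ G.Adj u v)
    (huw : G.Adj u w) (hwv : G.Adj w v) : G.dist u v = 2 := by
  have hle : G.dist u v ≤ 2 := by simpa using dist_le (huw.toWalk.append hwv.toWalk)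
  have h0 : G.dist u v ≠ 0 :=
    dist_ne_zero_iff_ne_and_reachable.2 ⟨hne, ⟨huw.toWalk.append hwv.toWalk⟩⟩
  have h1 : G.dist u v ≠ 1 := fun h => huv (dist_eq_one_iff_adj.1 h)
  omega

lemma minimalResolves_iff_bijOn {β : Type*} {f : V → β}
    (hf : ∀ W, Resolves G W ↔ InjOn f Wᶜ) {W : Set V} :
    MinimalResolves G W ↔ BijOn f Wᶜ (range f) := by
  simp only [MinimalResolves, hf, injOn_compl_minimal_iff_bijOn]

end SimpleGraph

namespace NZCGraph

open Set SimpleGraph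

variable {F : Type*} [Field F] {n : ℕ}

def skeleton (v : {v : Fin n → F // v ≠ 0}) : Set (Fin n) := Function.support v.1

lemma skeleton_nonempty (v : {v : Fin n → F // v ≠ 0}) : (skeleton v).Nonempty :=
  Function.support_nonempty_iff.2 v.2

lemma adj_iff {u v : {v : Fin n → F // v ≠ 0}} :
    (NZCGraph F n).Adj u v ↔ u ≠ v ∧ ¬ Disjoint (skeleton u) (skeleton v) := by
  rw [not_disjoint_iff_nonempty_inter]
  rfl

lemma adj_of_disjoint_of_val_eq_add {u v w : {v : Fin n → F // v ≠ 0}}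
    (h : Disjoint (skeleton u) (skeleton v)) (hw : w.1 = u.1 + v.1) : (NZCGraph F n).Adj u w := by
  obtain ⟨i, hi⟩ := skeleton_nonempty u
  have hvi : v.1 i = 0 := Function.notMem_support.1 (h.notMem_of_mem_left hi)
  refine ⟨?_, i, hi, ?_⟩
  · rintro rfl
    exact v.2 (by simpa using hw)
  · rw [hw, Pi.add_apply, hvi, add_zero]
    exact hi

lemma dist_eq_two_of_not_adj {u v : {v : Fin n → F // v ≠ 0}} (hne : u ≠ v)
    (h : ¬ (NZCGraph F n).Adj u v) : (NZCGraph F n).dist u v = 2 := by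
  have hdisj : Disjoint (skeleton u) (skeleton v) := by
    by_contra hd
    exact h (adj_iff.2 ⟨hne, hd⟩)
  have hsum : u.1 + v.1 ≠ 0 := fun h0 => by
    have hvu : skeleton v = skeleton u := by
      simp [skeleton, eq_neg_of_add_eq_zero_right h0]
    exact (skeleton_nonempty u).ne_empty (disjoint_self.1 (hvu ▸ hdisj))
  exact dist_eq_two_of_adj_of_adj (w := ⟨u.1 + v.1, hsum⟩) hne h
    (adj_of_disjoint_of_val_eq_add hdisj rfl)
    (adj_of_disjoint_of_val_eq_add hdisj.symm (add_comm _ _)).symm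

lemma dist_pos_of_ne {u v : {v : Fin n → F // v ≠ 0}} (hne : u ≠ v) :
    0 < (NZCGraph F n).dist u v := by
  by_cases hadj : (NZCGraph F n).Adj u v
  · simp [dist_eq_one_iff_adj.2 hadj]
  · simp [dist_eq_two_of_not_adj hne hadj]

lemma dist_eq_of_skeleton_eq {u v w : {v : Fin n → F // v ≠ 0}} (hu : u ≠ w) (hv : v ≠ w)
    (h : skeleton u = skeleton v) : (NZCGraph F n).dist u w = (NZCGraph F n).dist v w := by
  have hadj : (NZCGraph F n).Adj u w ↔ (NZCGraph F n).Adj v w := by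
    simp only [adj_iff, h, hu, hv, ne_eq, not_false_eq_true, true_and]
  by_cases huw : (NZCGraph F n).Adj u w
  · rw [dist_eq_one_iff_adj.2 huw, dist_eq_one_iff_adj.2 (hadj.1 huw)]
  · rw [dist_eq_two_of_not_adj hu huw, dist_eq_two_of_not_adj hv (mt hadj.2 huw)]

/-- Here `q ≥ 3` is needed: `Pi.single i 1` and `Pi.single i b` with `b ≠ 0, 1` share the
skeleton `{i}`, so they cannot both lie outside `W`. -/
lemma exists_mem_skeleton_eq_singleton [Fintype F] (hF : 2 < Fintype.card F)
    {W : Set {v : Fin n → F // v ≠ 0}} (hW : InjOn skeleton Wᶜ) (i : Fin n) :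
    ∃ w ∈ W, skeleton w = {i} := by
  classical
  have hunits : 1 < Fintype.card Fˣ := by rw [Fintype.card_units]; omega
  obtain ⟨b, hb⟩ := Fintype.exists_ne_of_one_lt_card hunits 1
  let e (c : Fˣ) : {v : Fin n → F // v ≠ 0} := ⟨Pi.single i (c : F), by simp⟩
  have he (c : Fˣ) : skeleton (e c) = {i} := Pi.support_single_of_ne c.ne_zero
  by_contra! hnone
  have h1 : e 1 ∈ Wᶜ := fun hw => hnone _ hw (he 1)
  have hb' : e b ∈ Wᶜ := fun hw => hnone _ hw (he b)
  have := congrFun (congrArg Subtype.val (hW h1 hb' (by rw [he, he]))) i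
  exact hb (Units.ext (by simpa [e] using this.symm))

lemma skeleton_subset_of_dist_eq {W : Set {v : Fin n → F // v ≠ 0}}
    (hW : ∀ i, ∃ w ∈ W, skeleton w = {i}) {u v : {v : Fin n → F // v ≠ 0}} (hu : u ∉ W)
    (hdist : ∀ w ∈ W, (NZCGraph F n).dist u w = (NZCGraph F n).dist v w) :
    skeleton u ⊆ skeleton v := by
  intro i hi
  by_contra hvi
  obtain ⟨w, hwW, hw⟩ := hW i
  have huw : (NZCGraph F n).Adj u w :=
    adj_iff.2 ⟨fun h => hu (h ▸ hwW), not_disjoint_iff.2 ⟨i, hi, hw ▸ rfl⟩⟩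
  have hvw : ¬ (NZCGraph F n).Adj v w := fun h =>
    (adj_iff.1 h).2 (hw ▸ disjoint_singleton_right.2 hvi)
  exact hvw (dist_eq_one_iff_adj.1 (hdist w hwW ▸ dist_eq_one_iff_adj.2 huw))

lemma resolves_iff_injOn_skeleton [Fintype F] (hF : 2 < Fintype.card F)
    (W : Set {v : Fin n → F // v ≠ 0}) : Resolves (NZCGraph F n) W ↔ InjOn skeleton Wᶜ := by
  refine ⟨fun hres u hu v hv h => hres u v fun w hw => ?_, fun hinj u v hdist => ?_⟩
  · exact dist_eq_of_skeleton_eq (fun h => hu (h ▸ hw)) (fun h => hv (h ▸ hw)) h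
  by_cases hu : u ∈ W
  · by_contra hne
    have := hdist u hu
    rw [dist_self] at this
    exact (dist_pos_of_ne (Ne.symm hne)).ne this
  by_cases hv : v ∈ W
  · by_contra hne
    have := hdist v hv
    rw [dist_self] at this
    exact (dist_pos_of_ne hne).ne' this
  have hsingle := exists_mem_skeleton_eq_singleton hF hinj
  exact hinj hu hv ((skeleton_subset_of_dist_eq hsingle hu hdist).antisymm
    (skeleton_subset_of_dist_eq hsingle hv fun w hw => (hdist w hw).symm))

end NZCGraph

theorem stmt18 (q n : ℕ) (F : Type*) [Field F] [Fintype F] (hq : Fintype.card F = q)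
    (h3 : 3 ≤ q) (W₁ W₂ : Set {v : Fin n → F // v ≠ 0})
    (h₁ : MinimalResolves (NZCGraph F n) W₁) (h₂ : MinimalResolves (NZCGraph F n) W₂)
    (u₁ : {v : Fin n → F // v ≠ 0}) (hu₁ : u₁ ∈ W₁) :
    ∃ u₂ ∈ W₂, MinimalResolves (NZCGraph F n) (insert u₂ (W₁ \ {u₁})) := by
  have hmin (W : Set {v : Fin n → F // v ≠ 0}) :
      MinimalResolves (NZCGraph F n) W ↔
        Set.BijOn NZCGraph.skeleton Wᶜ (Set.range NZCGraph.skeleton) :=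
    SimpleGraph.minimalResolves_iff_bijOn (NZCGraph.resolves_iff_injOn_skeleton (by omega))
  simp only [hmin] at h₁ h₂ ⊢
  exact Set.exists_bijOn_compl_insert_sdiff_singleton h₁ h₂ hu₁
end
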